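/- For every positive integer m, the number of alternating permutations of [2m-1] with exactly m fixed points equals D_{m-1}, the number of derangements of [m-1]. -/
import Mathlib

set_option linter.unnecessarySeqFocus false

/-- `π` is an alternating permutation: `π 1 > π 2 < π 3 > π 4 < ⋯`
(here stated with 0-indexed positions). -/
def IsAlternating {n : ℕ} (π : Equiv.Perm (Fin n)) : Prop :=
  ∀ i : ℕ, ∀ h : i + 1 < n,
    if i % 2 = 0 then π ⟨i + 1, h⟩ < π ⟨i, Nat.lt_of_succ_lt h⟩
    else π ⟨i, Nat.lt_of_succ_lt h⟩ < π ⟨i + 1, h⟩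

/-- `π` is a reverse alternating permutation: `π 1 < π 2 > π 3 < π 4 > ⋯`
(here stated with 0-indexed positions). -/
def IsRevAlternating {n : ℕ} (π : Equiv.Perm (Fin n)) : Prop :=
  ∀ i : ℕ, ∀ h : i + 1 < n,
    if i % 2 = 0 then π ⟨i, Nat.lt_of_succ_lt h⟩ < π ⟨i + 1, h⟩
    else π ⟨i + 1, h⟩ < π ⟨i, Nat.lt_of_succ_lt h⟩

/-- The number of fixed points of a permutation of `Fin n`. -/
def fixedPointCount {n : ℕ} (π : Equiv.Perm (Fin n)) : ℕ :=
  (Finset.univ.filter fun i => π i = i).card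

open Equiv

namespace AltOdd


variable {k : ℕ}

def pf (σ : Perm (Fin k)) (j : Fin k) : Fin (2 * k + 1) :=
  ⟨2 * j + if (j : ℕ) < σ j then 0 else 1, by have := j.isLt; split <;> omega⟩

lemma pf_bounds (σ : Perm (Fin k)) (j : Fin k) :
    2 * (j : ℕ) ≤ (pf σ j : ℕ) ∧ (pf σ j : ℕ) ≤ 2 * j + 1 := by
  simp only [pf]; split <;> omega

lemma pf_inj (σ : Perm (Fin k)) : Function.Injective (pf σ) := by
  intro a b h
  have ha := pf_bounds σ a
  have hb := pf_bounds σ b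
  have : (pf σ a : ℕ) = pf σ b := by rw [h]
  exact Fin.ext (by omega)

lemma pf_eq_of_lt (σ : Perm (Fin k)) {j : Fin k} (h : (j : ℕ) < σ j) :
    (pf σ j : ℕ) = 2 * j := by simp [pf, h]

lemma pf_eq_of_gt (σ : Perm (Fin k)) {j : Fin k} (h : (σ j : ℕ) < j) :
    (pf σ j : ℕ) = 2 * j + 1 := by simp [pf, Nat.not_lt.2 h.le]

def pemb (σ : Perm (Fin k)) : Fin k ↪ Fin (2 * k + 1) := ⟨pf σ, pf_inj σ⟩

def wperm (σ : Perm (Fin k)) : Perm (Fin (2 * k + 1)) :=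
  σ.viaFintypeEmbedding (pemb σ)

lemma wperm_apply_pf (σ : Perm (Fin k)) (j : Fin k) :
    wperm σ (pf σ j) = pf σ (σ j) :=
  σ.viaFintypeEmbedding_apply_image (pemb σ) j

lemma wperm_apply_of_notMem (σ : Perm (Fin k)) {x : Fin (2 * k + 1)}
    (h : ∀ j, pf σ j ≠ x) : wperm σ x = x := by
  refine σ.viaFintypeEmbedding_apply_notMem_range (pemb σ) ?_
  rintro ⟨j, rfl⟩; exact h j rfl

/-- the main dichotomy on a pair of positions `(2j, 2j+1)`. -/
lemma wperm_pair (σ : Perm (Fin k)) (hσ : ∀ j, σ j ≠ j) (j : Fin k)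
    {a b : Fin (2 * k + 1)} (ha : (a : ℕ) = 2 * j) (hb : (b : ℕ) = 2 * j + 1) :
    ((j : ℕ) < σ j ∧ wperm σ a = pf σ (σ j) ∧ wperm σ b = b)
  ∨ ((σ j : ℕ) < j ∧ wperm σ a = a ∧ wperm σ b = pf σ (σ j)) := by
  have hne : (σ j : ℕ) ≠ (j : ℕ) := fun h => hσ j (Fin.ext h)
  rcases hne.lt_or_gt with h | h
  · -- σ j < j : pf σ j = 2j+1 = b
    right
    have hpb : pf σ j = b := Fin.ext (by rw [pf_eq_of_gt σ h, hb])
    refine ⟨h, ?_, by rw [← hpb, wperm_apply_pf]⟩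
    apply wperm_apply_of_notMem
    intro j' hj'
    have h1 := pf_bounds σ j'
    have h2 : (pf σ j' : ℕ) = a := by rw [hj']
    have : j' = j := Fin.ext (by omega)
    subst this
    rw [pf_eq_of_gt σ h] at h2; omega
  · -- j < σ j : pf σ j = 2j = a
    left
    have hpa : pf σ j = a := Fin.ext (by rw [pf_eq_of_lt σ h, ha])
    refine ⟨h, by rw [← hpa, wperm_apply_pf], ?_⟩
    apply wperm_apply_of_notMem
    intro j' hj'
    have h1 := pf_bounds σ j'
    have h2 : (pf σ j' : ℕ) = b := by rw [hj']
    have : j' = j := Fin.ext (by omega)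
    subst this
    rw [pf_eq_of_lt σ h] at h2; omega

lemma wperm_alternating (σ : Perm (Fin k)) (hσ : ∀ j, σ j ≠ j) :
    IsAlternating (wperm σ) := by
  intro i h
  rcases Nat.even_or_odd i with ⟨j, hj⟩ | ⟨j, hj⟩
  · -- i = 2j even case : need wperm ⟨i+1⟩ < wperm ⟨i⟩
    have hjk : j < k := by omega
    have hi : i % 2 = 0 := by omega
    simp only [hi, if_pos rfl]
    set jf : Fin k := ⟨j, hjk⟩ with hjf
    have hd := wperm_pair σ hσ jf (a := ⟨i, Nat.lt_of_succ_lt h⟩) (b := ⟨i+1, h⟩)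
      (by simp [hjf]; omega) (by simp [hjf]; omega)
    have hb1 := pf_bounds σ (σ jf)
    rcases hd with ⟨hlt, h1, h2⟩ | ⟨hlt, h1, h2⟩
    · show (wperm σ ⟨i+1, h⟩ : ℕ) < wperm σ ⟨i, _⟩
      rw [h1, h2]
      simp only [hjf] at hb1 hlt ⊢
      omega
    · show (wperm σ ⟨i+1, h⟩ : ℕ) < wperm σ ⟨i, _⟩
      rw [h1, h2]
      simp only [hjf] at hb1 hlt ⊢
      omega
  · -- i = 2j+1 odd : need wperm ⟨i⟩ < wperm ⟨i+1⟩
    have hi : i % 2 = 1 := by omega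
    have hjk : j < k := by omega
    simp only [hi]
    norm_num
    set jf : Fin k := ⟨j, hjk⟩ with hjf
    have hd := wperm_pair σ hσ jf (a := ⟨i-1, by omega⟩) (b := ⟨i, Nat.lt_of_succ_lt h⟩)
      (by simp only [hjf]; omega) (by simp only [hjf]; omega)
    have hb1 := pf_bounds σ (σ jf)
    have hup : (wperm σ ⟨i, Nat.lt_of_succ_lt h⟩ : ℕ) ≤ i := by
      rcases hd with ⟨hlt, _, h2⟩ | ⟨hlt, _, h2⟩ <;> rw [h2] <;>
        simp only [hjf] at hb1 hlt ⊢ <;> omega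
    show (wperm σ ⟨i, _⟩ : ℕ) < wperm σ ⟨i+1, h⟩
    by_cases hlast : j + 1 < k
    · set jf2 : Fin k := ⟨j+1, hlast⟩ with hjf2
      have hd2 := wperm_pair σ hσ jf2 (a := ⟨i+1, h⟩) (b := ⟨i+2, by omega⟩)
        (by simp only [hjf2]; omega) (by simp only [hjf2]; omega)
      have hb2 := pf_bounds σ (σ jf2)
      rcases hd2 with ⟨hlt2, h3, _⟩ | ⟨hlt2, h3, _⟩ <;> rw [h3] <;>
        simp only [hjf2] at hb2 hlt2 ⊢ <;> omega
    · -- i + 1 = 2k, the last (fixed) position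
      have hieq : i + 1 = 2 * k := by omega
      have h3 : wperm σ ⟨i+1, h⟩ = ⟨i+1, h⟩ := by
        apply wperm_apply_of_notMem
        intro j' hj'
        have hb' := pf_bounds σ j'
        have hv : (pf σ j' : ℕ) = i + 1 := by rw [hj']
        have := j'.isLt
        omega
      have h4 : (wperm σ ⟨i+1, h⟩ : ℕ) = i + 1 := by rw [h3]
      omega

lemma wperm_eq_self_iff (σ : Perm (Fin k)) (hσ : ∀ j, σ j ≠ j) (x : Fin (2 * k + 1)) :
    wperm σ x = x ↔ ∀ j, pf σ j ≠ x := by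
  constructor
  · intro hx j hj
    rw [← hj, wperm_apply_pf] at hx
    exact hσ j (pf_inj σ hx)
  · exact wperm_apply_of_notMem σ

lemma wperm_fixedPointCount (σ : Perm (Fin k)) (hσ : ∀ j, σ j ≠ j) :
    fixedPointCount (wperm σ) = k + 1 := by
  classical
  have hsplit := Finset.card_filter_add_card_filter_not
    (s := (Finset.univ : Finset (Fin (2*k+1)))) (p := fun x => wperm σ x = x)
  have himg : Finset.univ.filter (fun x => ¬ wperm σ x = x)
      = Finset.univ.image (pf σ) := by
    ext x
    simp only [Finset.mem_filter, Finset.mem_univ, true_and, Finset.mem_image]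
    rw [wperm_eq_self_iff σ hσ]
    push_neg
    tauto
  have hcard : (Finset.univ.filter (fun x => ¬ wperm σ x = x)).card = k := by
    rw [himg, Finset.card_image_of_injective _ (pf_inj σ)]
    simp
  have : (Finset.univ : Finset (Fin (2*k+1))).card = 2*k+1 := by simp
  unfold fixedPointCount
  omega



/-- two adjacent positions `2j, 2j+1` cannot both be fixed. -/
lemma pair_not_both {π : Perm (Fin (2 * k + 1))} (hA : IsAlternating π)
    {a b : Fin (2 * k + 1)} {j : ℕ} (hj : j < k) (ha : (a : ℕ) = 2 * j)
    (hb : (b : ℕ) = 2 * j + 1) : ¬(π a = a ∧ π b = b) := by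
  rintro ⟨h1, h2⟩
  have h' : 2 * j + 1 < 2 * k + 1 := by omega
  have halt := hA (2 * j) h'
  rw [if_pos (by omega)] at halt
  have ea : (⟨2 * j, Nat.lt_of_succ_lt h'⟩ : Fin (2 * k + 1)) = a := Fin.ext (by simp [ha])
  have eb : (⟨2 * j + 1, h'⟩ : Fin (2 * k + 1)) = b := Fin.ext (by simp [hb])
  rw [ea, eb, h1, h2, Fin.lt_def] at halt
  omega

/-- every "pair index" `j ≤ k` contains a fixed point. -/
lemma pair_exists_fixed {π : Perm (Fin (2 * k + 1))} (hA : IsAlternating π)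
    (hF : fixedPointCount π = k + 1) (j : ℕ) (hj : j ≤ k) :
    ∃ x : Fin (2 * k + 1), π x = x ∧ (x : ℕ) / 2 = j := by
  classical
  set F := Finset.univ.filter (fun i => π i = i) with hFdef
  have hcard : F.card = k + 1 := hF
  set g : Fin (2 * k + 1) → Fin (k + 1) :=
    fun x => ⟨(x : ℕ) / 2, by have := x.isLt; omega⟩ with hg
  have hinj : Set.InjOn g F := by
    intro x hx y hy hxy
    by_contra hne
    have hvne : (x : ℕ) ≠ y := fun h => hne (Fin.ext h)
    have hval : (x : ℕ) / 2 = (y : ℕ) / 2 := congrArg Fin.val hxy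
    have hxk := x.isLt
    have hyk := y.isLt
    have hx' : π x = x := (Finset.mem_filter.mp hx).2
    have hy' : π y = y := (Finset.mem_filter.mp hy).2
    set j0 := (x : ℕ) / 2 with hj0
    have hj0k : j0 < k := by omega
    rcases Nat.lt_or_ge (x : ℕ) (y : ℕ) with hlt | hge
    · exact pair_not_both hA hj0k (a := x) (b := y) (by omega) (by omega) ⟨hx', hy'⟩
    · exact pair_not_both hA hj0k (a := y) (b := x) (by omega) (by omega) ⟨hy', hx'⟩
  have himg : F.image g = Finset.univ := by
    apply Finset.eq_univ_of_card
    rw [Finset.card_image_of_injOn hinj, hcard, Fintype.card_fin]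
  have hmem : (⟨j, by omega⟩ : Fin (k + 1)) ∈ F.image g := by rw [himg]; simp
  obtain ⟨x, hxF, hgx⟩ := Finset.mem_image.mp hmem
  exact ⟨x, (Finset.mem_filter.mp hxF).2, congrArg Fin.val hgx⟩


lemma exists_wperm {π : Perm (Fin (2 * k + 1))} (hA : IsAlternating π)
    (hF : fixedPointCount π = k + 1) :
    ∃ σ : Perm (Fin k), (∀ j, σ j ≠ j) ∧
      ∃ q : Fin k → Fin (2 * k + 1),
        (∀ j : Fin k, 2 * (j : ℕ) ≤ q j ∧ (q j : ℕ) ≤ 2 * j + 1) ∧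
        (∀ j, π (q j) ≠ q j) ∧
        (∀ x : Fin (2 * k + 1), (∀ j, q j ≠ x) → π x = x) ∧
        (∀ j, π (q j) = q (σ j)) ∧
        (∀ j : Fin k, ((j : ℕ) < σ j ∧ (q j : ℕ) = 2 * j) ∨
          ((σ j : ℕ) < j ∧ (q j : ℕ) = 2 * j + 1)) := by
  classical
  -- the fixed point at the last position
  have hfix2k : ∀ x : Fin (2 * k + 1), (x : ℕ) = 2 * k → π x = x := by
    intro x hx
    obtain ⟨y, hy1, hy2⟩ := pair_exists_fixed hA hF k le_rfl
    have : y = x := Fin.ext (by have := y.isLt; omega)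
    rwa [← this]
  -- the non-fixed position of each pair
  set q : Fin k → Fin (2 * k + 1) := fun j =>
    if π ⟨2 * (j : ℕ), by have := j.isLt; omega⟩ = ⟨2 * (j : ℕ), by have := j.isLt; omega⟩
    then ⟨2 * (j : ℕ) + 1, by have := j.isLt; omega⟩
    else ⟨2 * (j : ℕ), by have := j.isLt; omega⟩ with hqdef
  have hqspec : ∀ j : Fin k, ∀ a b : Fin (2 * k + 1), (a : ℕ) = 2 * j →
      (b : ℕ) = 2 * j + 1 →
      (q j = b ∧ π a = a ∧ π b ≠ b) ∨ (q j = a ∧ π b = b ∧ π a ≠ a) := by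
    intro j a b ha hb
    have hjk := j.isLt
    have hae : (⟨2 * (j : ℕ), by omega⟩ : Fin (2 * k + 1)) = a := Fin.ext (by simp [ha])
    rw [hqdef]
    simp only
    split_ifs with hc
    · rw [hae] at hc
      left
      exact ⟨Fin.ext (by simp [hb]), hc,
        fun hb' => pair_not_both hA hjk ha hb ⟨hc, hb'⟩⟩
    · rw [hae] at hc
      right
      refine ⟨Fin.ext (by simp [ha]), ?_, hc⟩
      obtain ⟨y, hy1, hy2⟩ := pair_exists_fixed hA hF j (le_of_lt hjk)
      have : y = a ∨ y = b := by
        have := y.isLt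
        rcases Nat.lt_or_ge (y : ℕ) (2 * j + 1) with h | h
        · exact Or.inl (Fin.ext (by omega))
        · exact Or.inr (Fin.ext (by omega))
      rcases this with rfl | rfl
      · exact absurd hy1 hc
      · exact hy1
  -- basic bounds for q
  have hqb : ∀ j : Fin k, 2 * (j : ℕ) ≤ q j ∧ (q j : ℕ) ≤ 2 * j + 1 := by
    intro j
    have hjk := j.isLt
    rcases hqspec j ⟨2 * (j:ℕ), by omega⟩ ⟨2 * (j:ℕ) + 1, by omega⟩ rfl rfl with
      ⟨h1, _, _⟩ | ⟨h1, _, _⟩ <;> rw [h1] <;> simp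
  have hqinj : Function.Injective q := by
    intro a b h
    have ha := hqb a; have hb := hqb b
    have : (q a : ℕ) = q b := by rw [h]
    exact Fin.ext (by omega)
  -- q j is not fixed
  have hqnf : ∀ j, π (q j) ≠ q j := by
    intro j
    have hjk := j.isLt
    rcases hqspec j ⟨2 * (j:ℕ), by omega⟩ ⟨2 * (j:ℕ) + 1, by omega⟩ rfl rfl with
      ⟨h1, _, h3⟩ | ⟨h1, _, h3⟩ <;> rw [h1] <;> exact h3
  -- anything not in the range of q is fixed
  have hfix : ∀ x : Fin (2 * k + 1), (∀ j, q j ≠ x) → π x = x := by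
    intro x hx
    have hxk := x.isLt
    rcases Nat.lt_or_ge (x : ℕ) (2 * k) with hlt | hge
    · set j : Fin k := ⟨(x : ℕ) / 2, by omega⟩ with hjdef
      rcases hqspec j ⟨2 * ((x:ℕ)/2), by omega⟩ ⟨2 * ((x:ℕ)/2) + 1, by omega⟩
        (by simp [hjdef]) (by simp [hjdef]) with ⟨h1, h2, _⟩ | ⟨h1, h2, _⟩
      · -- q j = b ; if x = b contradiction, else x = a fixed
        rcases Nat.lt_or_ge (x : ℕ) (2 * ((x:ℕ)/2) + 1) with h | h
        · have : (⟨2 * ((x:ℕ)/2), by omega⟩ : Fin (2*k+1)) = x := Fin.ext (by simp; omega)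
          rwa [this] at h2
        · exact absurd (h1.trans (Fin.ext (by simp; omega))) (hx j)
      · rcases Nat.lt_or_ge (x : ℕ) (2 * ((x:ℕ)/2) + 1) with h | h
        · exact absurd (h1.trans (Fin.ext (by simp; omega))) (hx j)
        · have : (⟨2 * ((x:ℕ)/2) + 1, by omega⟩ : Fin (2*k+1)) = x := Fin.ext (by simp; omega)
          rwa [this] at h2
    · exact hfix2k x (by omega)
  -- the image of a non-fixed point is non-fixed, hence in the range of q
  have hmem : ∀ j, ∃ j', q j' = π (q j) := by
    intro j
    by_contra hcon
    push_neg at hcon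
    have h1 : π (π (q j)) = π (q j) := hfix _ hcon
    exact hqnf j (π.injective h1)
  choose σ' hσ' using hmem
  -- σ' is injective, hence bijective
  have hinj : Function.Injective σ' := by
    intro a b h
    have : π (q a) = π (q b) := by rw [← hσ' a, ← hσ' b, h]
    exact hqinj (π.injective this)
  have hbij : Function.Bijective σ' := (Finite.injective_iff_bijective).mp hinj
  refine ⟨Equiv.ofBijective σ' hbij, ?_, q, hqb, hqnf, hfix, ?_, ?_⟩
  · intro j hj
    simp only [Equiv.ofBijective_apply] at hj
    exact hqnf j (by rw [← hσ' j, hj])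
  · intro j
    simp only [Equiv.ofBijective_apply]
    exact (hσ' j).symm
  · -- the position/value inequalities
    intro j
    have hjk := j.isLt
    simp only [Equiv.ofBijective_apply]
    have h' : 2 * (j : ℕ) + 1 < 2 * k + 1 := by omega
    have halt := hA (2 * (j : ℕ)) h'
    rw [if_pos (by omega)] at halt
    rw [Fin.lt_def] at halt
    have hσb := hqb (σ' j)
    have hv : (q (σ' j) : ℕ) = π (q j) := by rw [hσ' j]
    rcases hqspec j ⟨2 * (j:ℕ), Nat.lt_of_succ_lt h'⟩ ⟨2 * (j:ℕ) + 1, h'⟩ rfl rfl with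
      ⟨h1, h2, _⟩ | ⟨h1, h2, _⟩
    · -- q j = b = 2j+1, a fixed : π (q j) < 2j so σ' j < j
      right
      have hqv : (q j : ℕ) = 2 * j + 1 := by rw [h1]
      have hπa : (π ⟨2 * (j:ℕ), Nat.lt_of_succ_lt h'⟩ : ℕ) = 2 * j := by rw [h2]
      have hqe : (⟨2 * (j:ℕ) + 1, h'⟩ : Fin (2*k+1)) = q j := h1.symm
      rw [hqe] at halt
      omega
    · -- q j = a = 2j, b fixed : π (q j) > 2j+1 so σ' j > j
      left
      have hqv : (q j : ℕ) = 2 * j := by rw [h1]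
      have hπb : (π ⟨2 * (j:ℕ) + 1, h'⟩ : ℕ) = 2 * j + 1 := by rw [h2]
      have hqe : (⟨2 * (j:ℕ), Nat.lt_of_succ_lt h'⟩ : Fin (2*k+1)) = q j := h1.symm
      rw [hqe] at halt
      omega


lemma wperm_surj {π : Perm (Fin (2 * k + 1))} (hA : IsAlternating π)
    (hF : fixedPointCount π = k + 1) :
    ∃ σ : Perm (Fin k), (∀ j, σ j ≠ j) ∧ wperm σ = π := by
  obtain ⟨σ, hσ, q, hqb, hqnf, hfix, hπq, hineq⟩ := exists_wperm hA hF
  have hpf : ∀ j, pf σ j = q j := by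
    intro j
    rcases hineq j with ⟨h1, h2⟩ | ⟨h1, h2⟩
    · exact Fin.ext (by rw [pf_eq_of_lt σ h1, h2])
    · exact Fin.ext (by rw [pf_eq_of_gt σ h1, h2])
  refine ⟨σ, hσ, ?_⟩
  ext x
  by_cases hx : ∃ j, q j = x
  · obtain ⟨j, rfl⟩ := hx
    rw [← hpf j, wperm_apply_pf, hpf, hpf]
    exact congrArg Fin.val (hπq j).symm
  · push_neg at hx
    rw [wperm_apply_of_notMem σ (fun j => by rw [hpf j]; exact hx j)]
    exact congrArg Fin.val (hfix x hx).symm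

lemma wperm_injective (σ τ : Perm (Fin k)) (hσ : ∀ j, σ j ≠ j) (hτ : ∀ j, τ j ≠ j)
    (h : wperm σ = wperm τ) : σ = τ := by
  have hpp : ∀ j, pf σ j = pf τ j := by
    intro j
    have hbσ := pf_bounds σ j
    have hbτ := pf_bounds τ j
    by_contra hne
    have hvne : (pf σ j : ℕ) ≠ pf τ j := fun hv => hne (Fin.ext hv)
    rcases Nat.lt_or_ge (pf σ j : ℕ) (pf τ j : ℕ) with hlt | hge
    · -- pf σ j = 2j, pf τ j = 2j+1
      have h1 : wperm τ (pf σ j) = pf σ j := by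
        apply wperm_apply_of_notMem
        intro j' hj'
        have hb' := pf_bounds τ j'
        have hv : (pf τ j' : ℕ) = pf σ j := by rw [hj']
        have : j' = j := Fin.ext (by omega)
        subst this
        omega
      have h2 : wperm σ (pf σ j) = pf σ (σ j) := wperm_apply_pf σ j
      rw [h, h1] at h2
      exact hσ j (pf_inj σ h2.symm)
    · -- pf τ j = 2j, pf σ j = 2j+1
      have h1 : wperm σ (pf τ j) = pf τ j := by
        apply wperm_apply_of_notMem
        intro j' hj'
        have hb' := pf_bounds σ j'
        have hv : (pf σ j' : ℕ) = pf τ j := by rw [hj']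
        have : j' = j := Fin.ext (by omega)
        subst this
        omega
      have h2 : wperm τ (pf τ j) = pf τ (τ j) := wperm_apply_pf τ j
      rw [← h, h1] at h2
      exact hτ j (pf_inj τ h2.symm)
  apply Equiv.ext
  intro j
  apply pf_inj σ
  have h1 : wperm σ (pf σ j) = pf σ (σ j) := wperm_apply_pf σ j
  have h2 : wperm τ (pf τ j) = pf τ (τ j) := wperm_apply_pf τ j
  rw [← hpp j, ← h, h1] at h2
  rw [h2, ← hpp (τ j)]

theorem key (k : ℕ) :
    Nat.card {π : Perm (Fin (2 * k + 1)) // IsAlternating π ∧ fixedPointCount π = k + 1}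
      = numDerangements k := by
  classical
  have hbij : Function.Bijective
      (fun σ : {σ : Perm (Fin k) // ∀ j, σ j ≠ j} =>
        (⟨wperm σ.1, wperm_alternating σ.1 σ.2, wperm_fixedPointCount σ.1 σ.2⟩ :
          {π : Perm (Fin (2 * k + 1)) // IsAlternating π ∧ fixedPointCount π = k + 1})) := by
    constructor
    · rintro ⟨σ, hσ⟩ ⟨τ, hτ⟩ hst
      simp only [Subtype.mk.injEq] at hst ⊢
      exact wperm_injective σ τ hσ hτ hst
    · rintro ⟨π, hA, hF⟩
      obtain ⟨σ, hσ, hw⟩ := wperm_surj hA hF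
      exact ⟨⟨σ, hσ⟩, Subtype.ext hw⟩
  rw [Nat.card_congr (Equiv.ofBijective _ hbij).symm]
  have e2 : {σ : Perm (Fin k) // ∀ j, σ j ≠ j} ≃ derangements (Fin k) :=
    Equiv.subtypeEquivRight (fun σ => Iff.rfl)
  rw [Nat.card_congr e2, Nat.card_eq_fintype_card]
  exact card_derangements_fin_eq_numDerangements

end AltOdd

/-- For every positive integer `m`, the number of alternating permutations of `[2m-1]` with
exactly `m` fixed points equals `D_{m-1}`. -/
theorem alternating_odd_count (m : ℕ) (hm : 1 ≤ m) :
    Nat.card {π : Equiv.Perm (Fin (2 * m - 1)) // IsAlternating π ∧ fixedPointCount π = m} =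
      numDerangements (m - 1) := by
  obtain ⟨k, rfl⟩ : ∃ k, m = k + 1 := ⟨m - 1, by omega⟩
  have h1 : 2 * (k + 1) - 1 = 2 * k + 1 := by omega
  have h2 : k + 1 - 1 = k := by omega
  rw [h1, h2]
  exact AltOdd.key k
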